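/- Let D be a degree on the ordinal S. If a is maximal in C(a,b), b ≤ d < S, and C(a,d) is defined, then a is maximal in C(a,d). -/

import Mathlib

open Ordinal Set

noncomputable section

/-- The set of limit points of a set `X` of ordinals: the limit ordinals `c` such that
`X ∩ c` is unbounded in `c`. -/
def limPts (X : Set Ordinal) : Set Ordinal :=
  {c | Order.IsSuccLimit c ∧ ∀ b < c, ∃ x ∈ X, b < x ∧ x < c}

/-- `D` is a degree on the ordinal `S`.  For `c, a < S`, `D c a` reads "`c` has degree `a`". -/
structure IsDegree (S : Ordinal) (D : Ordinal → Ordinal → Prop) : Prop where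
  /-- every `c < S` has degree `0` -/
  deg_zero : ∀ c < S, D c 0
  /-- `0` only has degree `0` -/
  zero_only : ∀ a < S, D 0 a → a = 0
  /-- for a limit `a`, `c` has degree `a` iff it has every degree less than `a` -/
  limit : ∀ a < S, Order.IsSuccLimit a → ∀ c < S, (D c a ↔ ∀ b < a, D c b)
  /-- the successor condition -/
  succ : ∀ a, a + 1 < S →
      {c | c < S ∧ D c (a + 1)} = limPts {c | c < S ∧ D c a} ∩ {c | c < S} ∨
      ∃ d ≤ a, d < S ∧ Order.IsSuccLimit d ∧
        {c | c < S ∧ D c (a + 1)} =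
          (limPts {c | c < S ∧ D c a} ∪ {c | (c < S ∧ D c a) ∧ c ≤ d}) ∩ {c | c < S}

/-- The set of candidate values for the collapsing function `C(a,b)`: ordinals `c < S`
above `b` having some degree `a' ≥ a`. -/
def CSet (S : Ordinal) (D : Ordinal → Ordinal → Prop) (a b : Ordinal) : Set Ordinal :=
  {c | c < S ∧ b < c ∧ ∃ a', a ≤ a' ∧ a' < S ∧ D c a'}

/-- `C(a,b)` is defined iff some candidate value exists. -/
def CDefined (S : Ordinal) (D : Ordinal → Ordinal → Prop) (a b : Ordinal) : Prop :=
  (CSet S D a b).Nonempty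

/-- The collapsing function `C(a,b)`: the least element of `CSet S D a b`
(meaningful when `CDefined S D a b`). -/
def Cval (S : Ordinal) (D : Ordinal → Ordinal → Prop) (a b : Ordinal) : Ordinal :=
  sInf (CSet S D a b)

/-- `a` is maximal in `C(a,b)`: `C(a,b)` is defined and has no degree strictly greater
than `a`. -/
def CMaximal (S : Ordinal) (D : Ordinal → Ordinal → Prop) (a b : Ordinal) : Prop :=
  CDefined S D a b ∧ ∀ a', a < a' → a' < S → ¬ D (Cval S D a b) a'

/-- `b` is minimal in `C(a,b)`: `C(a,b)` is defined and `C(a,b') < C(a,b)` for every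
`b' < b`. -/
def CMinimal (S : Ordinal) (D : Ordinal → Ordinal → Prop) (a b : Ordinal) : Prop :=
  CDefined S D a b ∧ ∀ b' < b, Cval S D a b' < Cval S D a b

end

/-!
Every `C_a` is closed below `S`, by induction on `a`; hence `C_{a+1} ⊆ C_a` and degrees are
downward closed. Suppose `C(a,d)` had a degree above `a`; then it has degree `a + 1`. It is not
a limit point of `C_a`, because no element of `C_a` lies strictly between `d` and `C(a,d)`. So
the successor axiom can only put `C(a,d)` into `C_{a+1}` through its second alternative,
`C(a,d) ≤ e` for a limit `e` below which all of `C_a` has degree `a + 1`. Since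
`C(a,b) ≤ C(a,d)` and `C(a,b) ∈ C_a`, also `C(a,b)` would have degree `a + 1`, against the
maximality of `a` in `C(a,b)`.
-/

/-- The set `C_a` of the paper. -/
def degreeSet (S : Ordinal) (D : Ordinal → Ordinal → Prop) (a : Ordinal) : Set Ordinal :=
  {c | c < S ∧ D c a}

lemma limPts_subset_limPts_of_subset_union {X Z : Set Ordinal} (h : Z ⊆ limPts X ∪ X) :
    limPts Z ⊆ limPts X := by
  rintro c ⟨hc, hub⟩
  refine ⟨hc, fun b hb => ?_⟩
  obtain ⟨z, hz, hbz, hzc⟩ := hub b hb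
  rcases h hz with hzX | hzX
  · obtain ⟨x, hx, hbx, hxz⟩ := hzX.2 b hbz
    exact ⟨x, hx, hbx, hxz.trans hzc⟩
  · exact ⟨z, hzX, hbz, hzc⟩

lemma limPts_mono {X Z : Set Ordinal} (h : Z ⊆ X) : limPts Z ⊆ limPts X :=
  limPts_subset_limPts_of_subset_union (h.trans subset_union_right)

namespace IsDegree

variable {S : Ordinal} {D : Ordinal → Ordinal → Prop}

lemma degreeSet_succ_subset_union (hD : IsDegree S D) {a : Ordinal} (ha : a + 1 < S) :
    degreeSet S D (a + 1) ⊆ limPts (degreeSet S D a) ∪ degreeSet S D a := by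
  intro c hc
  rcases hD.succ a ha with heq | ⟨e, -, -, -, heq⟩
  · exact Or.inl ((Set.ext_iff.mp heq c).mp hc).1
  · rcases ((Set.ext_iff.mp heq c).mp hc).1 with hlim | hmem
    · exact Or.inl hlim
    · exact Or.inr hmem.1

lemma degree_succ_of_mem_limPts (hD : IsDegree S D) {a c : Ordinal} (ha : a + 1 < S)
    (hc : c ∈ limPts (degreeSet S D a)) (hcS : c < S) : D c (a + 1) := by
  rcases hD.succ a ha with heq | ⟨e, -, -, -, heq⟩
  · exact ((Set.ext_iff.mp heq c).mpr ⟨hc, hcS⟩).2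
  · exact ((Set.ext_iff.mp heq c).mpr ⟨Or.inl hc, hcS⟩).2

lemma degreeSet_subset_of_lt_of_isSuccLimit (hD : IsDegree S D) {a a' : Ordinal} (ha : a < S)
    (hlim : Order.IsSuccLimit a) (ha' : a' < a) : degreeSet S D a ⊆ degreeSet S D a' :=
  fun c ⟨hcS, hc⟩ => ⟨hcS, (hD.limit a ha hlim c hcS).mp hc a' ha'⟩

lemma degree_of_mem_limPts (hD : IsDegree S D) {a c : Ordinal} (ha : a < S)
    (hc : c ∈ limPts (degreeSet S D a)) (hcS : c < S) : D c a := by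
  induction a using Ordinal.limitRecOn generalizing c with
  | zero => exact hD.deg_zero c hcS
  | add_one a ih =>
    refine hD.degree_succ_of_mem_limPts ha ?_ hcS
    refine limPts_subset_limPts_of_subset_union (fun x hx => ?_) hc
    rcases hD.degreeSet_succ_subset_union ha hx with hlim | hmem
    · exact Or.inr ⟨hx.1, ih ((lt_add_one a).trans ha) hlim hx.1⟩
    · exact Or.inr hmem
  | limit a hlim ih =>
    refine (hD.limit a ha hlim c hcS).mpr fun a' ha' => ?_
    exact ih a' ha' (ha'.trans ha)
      (limPts_mono (hD.degreeSet_subset_of_lt_of_isSuccLimit ha hlim ha') hc) hcS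

lemma degreeSet_succ_subset (hD : IsDegree S D) {a : Ordinal} (ha : a + 1 < S) :
    degreeSet S D (a + 1) ⊆ degreeSet S D a := by
  intro c hc
  rcases hD.degreeSet_succ_subset_union ha hc with hlim | hmem
  · exact ⟨hc.1, hD.degree_of_mem_limPts ((lt_add_one a).trans ha) hlim hc.1⟩
  · exact hmem

lemma degree_of_le (hD : IsDegree S D) {a a' c : Ordinal} (ha : a < S) (hcS : c < S)
    (hc : D c a) (ha' : a' ≤ a) : D c a' := by
  induction a using Ordinal.limitRecOn generalizing a' with
  | zero => rwa [nonpos_iff_eq_zero.mp ha']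
  | add_one a ih =>
    rcases ha'.lt_or_eq with ha' | rfl
    · exact ih ((lt_add_one a).trans ha) (hD.degreeSet_succ_subset ha ⟨hcS, hc⟩).2
        (Order.lt_add_one_iff.mp ha')
    · exact hc
  | limit a hlim _ =>
    rcases ha'.lt_or_eq with ha' | rfl
    · exact (hD.limit a ha hlim c hcS).mp hc a' ha'
    · exact hc

lemma degree_succ_of_le_of_notMem_limPts (hD : IsDegree S D) {a c c' : Ordinal}
    (ha : a + 1 < S) (hcS : c < S) (hc : D c (a + 1)) (hc_lim : c ∉ limPts (degreeSet S D a))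
    (hc'c : c' ≤ c) (hc'S : c' < S) (hc' : D c' a) : D c' (a + 1) := by
  rcases hD.succ a ha with heq | ⟨e, -, -, -, heq⟩
  · exact absurd ((Set.ext_iff.mp heq c).mp ⟨hcS, hc⟩).1 hc_lim
  · rcases ((Set.ext_iff.mp heq c).mp ⟨hcS, hc⟩).1 with hlim | ⟨-, hce⟩
    · exact absurd hlim hc_lim
    · exact ((Set.ext_iff.mp heq c').mpr
        ⟨Or.inr ⟨⟨hc'S, hc'⟩, hc'c.trans hce⟩, hc'S⟩).2

lemma degree_of_mem_CSet (hD : IsDegree S D) {a b c : Ordinal} (hc : c ∈ CSet S D a b) :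
    D c a :=
  let ⟨hcS, _, _, haa', ha'S, hca'⟩ := hc
  hD.degree_of_le ha'S hcS hca' haa'

end IsDegree

section Collapse

variable {S : Ordinal} {D : Ordinal → Ordinal → Prop} {a b d : Ordinal}

lemma Cval_mem (h : CDefined S D a b) : Cval S D a b ∈ CSet S D a b := csInf_mem h

lemma CSet_antitone (hbd : b ≤ d) : CSet S D a d ⊆ CSet S D a b :=
  fun _ ⟨hcS, hdc, hdeg⟩ => ⟨hcS, hbd.trans_lt hdc, hdeg⟩

lemma Cval_mono (hbd : b ≤ d) (h : CDefined S D a d) : Cval S D a b ≤ Cval S D a d :=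
  csInf_le' (CSet_antitone hbd (Cval_mem h))

lemma lt_of_CDefined (h : CDefined S D a b) : a < S :=
  let ⟨_, _, _, _, haa', ha'S, _⟩ := h
  haa'.trans_lt ha'S

lemma Cval_notMem_limPts (h : CDefined S D a b) : Cval S D a b ∉ limPts (degreeSet S D a) := by
  rintro ⟨-, hub⟩
  obtain ⟨x, ⟨hxS, hx⟩, hbx, hxc⟩ := hub b (Cval_mem h).2.1
  exact (csInf_le' ⟨hxS, hbx, a, le_rfl, lt_of_CDefined h, hx⟩ : Cval S D a b ≤ x).not_gt hxc

end Collapse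

theorem CMaximal_of_le_general (S : Ordinal) (D : Ordinal → Ordinal → Prop)
    (hD : IsDegree S D) (a b d : Ordinal) (hmax : CMaximal S D a b)
    (hbd : b ≤ d) (h : CDefined S D a d) :
    CMaximal S D a d := by
  refine ⟨h, fun a' haa' ha'S hd_deg => ?_⟩
  have ha1S : a + 1 < S := (Order.add_one_le_iff.mpr haa').trans_lt ha'S
  obtain ⟨hdS, -⟩ := Cval_mem h
  have hd_succ : D (Cval S D a d) (a + 1) :=
    hD.degree_of_le ha'S hdS hd_deg (Order.add_one_le_iff.mpr haa')
  have hb_mem : Cval S D a b ∈ CSet S D a b := Cval_mem hmax.1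
  have hb_succ : D (Cval S D a b) (a + 1) :=
    hD.degree_succ_of_le_of_notMem_limPts ha1S hdS hd_succ (Cval_notMem_limPts h)
      (Cval_mono hbd h) hb_mem.1 (hD.degree_of_mem_CSet hb_mem)
  exact hmax.2 (a + 1) (lt_add_one a) ha1S hb_succ

theorem CMaximal_of_le (S : Ordinal) (D : Ordinal → Ordinal → Prop)
    (hD : IsDegree S D) (a b d : Ordinal) (hmax : CMaximal S D a b)
    (hbd : b ≤ d) (hd : d < S) (h : CDefined S D a d) :
    CMaximal S D a d :=
  CMaximal_of_le_general S D hD a b d hmax hbd h
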